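/- arXiv:2410.24145 — 2 statements merged into one kernel-verified Lean document; each statement's English description precedes it below -/
import Mathlib

section
/- Let (R_1, …, R_n, R_{n+1}) be an exchangeable random vector of real-valued random variables that are almost surely pairwise distinct. Let 0 < α < 1 be such that ⌈(1-α)(n+1)⌉ ≤ n, and let r̂ denote the ⌈(1-α)(n+1)⌉-th order statistic of R_1, …, R_n. Then P(R_{n+1} ≤ r̂) < 1 - α + 1/(n+1). -/
open MeasureTheory

/-- The `k`-th order statistic (0-indexed) of the tuple `f : Fin m → ℝ`. -/
noncomputable def orderStat {m : ℕ} (f : Fin m → ℝ) (k : Fin m) : ℝ :=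
  f (Tuple.sort f k)

/-- A random vector `R` is exchangeable if every permutation of its components
has the same joint distribution as the original. -/
def Exchangeable {Ω : Type*} [MeasurableSpace Ω] (P : Measure Ω) {m : ℕ}
    (R : Ω → Fin m → ℝ) : Prop :=
  ∀ π : Equiv.Perm (Fin m), Measure.map (fun ω => R ω ∘ π) P = Measure.map R P

/-!
Write `rank f j` for the number of coordinates of `f` strictly below `f j`. Without any
assumption on ties, `R_{n+1} ≤ r̂` holds exactly when fewer than `⌈(1-α)(n+1)⌉` of
`R_1, …, R_n` lie strictly below `R_{n+1}`, i.e. when `rank R (n+1) < ⌈(1-α)(n+1)⌉`.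
When the components are distinct, `rank R` is a bijection onto `{0, …, n}`, and
exchangeability makes the events `{rank R j = i}` equiprobable in `j`; so the rank of the
last component is uniform and the probability is `⌈(1-α)(n+1)⌉ / (n+1) < 1 - α + 1/(n+1)`.
-/

open Finset
open scoped ENNReal

section Rank

variable {ι α : Type*} [Fintype ι] [LinearOrder α]

def rank (f : ι → α) (j : ι) : ℕ := #{i | f i < f j}

lemma card_filter_comp_equiv {κ : Type*} [Fintype κ] (σ : κ ≃ ι) (p : ι → Prop)
    [DecidablePred p] : #{i | p (σ i)} = #{i | p i} :=
  card_equiv σ (by simp)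

lemma rank_comp_equiv {κ : Type*} [Fintype κ] (f : ι → α) (σ : κ ≃ ι) (j : κ) :
    rank (f ∘ σ) j = rank f (σ j) :=
  card_filter_comp_equiv σ (f · < f (σ j))

lemma rank_lt_card (f : ι → α) (j : ι) : rank f j < Fintype.card ι :=
  card_lt_univ_of_notMem (x := j) (by simp)

lemma rank_lt_rank {f : ι → α} {a b : ι} (h : f a < f b) : rank f a < rank f b :=
  card_lt_card <| (ssubset_iff_of_subset fun i hi => by
    simp only [mem_filter, mem_univ, true_and] at hi ⊢; exact hi.trans h).2 ⟨a, by simp [h]⟩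

lemma rank_injective {f : ι → α} (hf : Function.Injective f) : Function.Injective (rank f) := by
  intro a b hab
  by_contra hne
  rcases lt_or_gt_of_ne (hf.ne hne) with h | h
  · exact (rank_lt_rank h).ne hab
  · exact (rank_lt_rank h).ne' hab

lemma card_rank_eq {f : ι → α} (hf : Function.Injective f) {i : ℕ}
    (hi : i < Fintype.card ι) : #{j | rank f j = i} = 1 := by
  let r : ι → Fin (Fintype.card ι) := fun j => ⟨rank f j, rank_lt_card f j⟩
  have hr : Function.Bijective r := (Fintype.bijective_iff_injective_and_card r).2
    ⟨fun a b hab => rank_injective hf (Fin.val_eq_of_eq hab), by simp⟩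
  obtain ⟨j, hj⟩ := hr.2 ⟨i, hi⟩
  refine card_eq_one.2 ⟨j, eq_singleton_iff_unique_mem.2
    ⟨by simpa [r] using congrArg Fin.val hj, fun j' hj' => ?_⟩⟩
  exact hr.1 (Fin.ext ((mem_filter.1 hj').2.trans (congrArg Fin.val hj).symm))

end Rank

lemma rank_last {n : ℕ} {α : Type*} [LinearOrder α] (f : Fin (n + 1) → α) :
    rank f (Fin.last n) = #{i : Fin n | f i.castSucc < f (Fin.last n)} := by
  rw [rank, Fin.univ_castSuccEmb, filter_cons_of_neg (p := (f · < f (Fin.last n))) _ _ _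
    (lt_irrefl _), filter_map, card_map]
  rfl

lemma le_orderStat_iff_card_lt_le {m : ℕ} (g : Fin m → ℝ) (k : Fin m) (x : ℝ) :
    x ≤ orderStat g k ↔ #{i | g i < x} ≤ k := by
  -- `{i | g (Tuple.sort g i) < x}` is an initial segment, since `g ∘ Tuple.sort g` is monotone.
  rw [← card_filter_comp_equiv (Tuple.sort g), ← not_lt, ← not_lt,
    Fin.lt_card_filter_univ_iff_apply_of_imp (fun i => g (Tuple.sort g i) < x)
      fun i j hji hi => (Tuple.monotone_sort g hji).trans_lt hi]
  rfl

lemma le_orderStat_init_iff_rank_le {n : ℕ} (f : Fin (n + 1) → ℝ) (k : Fin n) :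
    f (Fin.last n) ≤ orderStat (fun i => f i.castSucc) k ↔ rank f (Fin.last n) ≤ k := by
  rw [le_orderStat_iff_card_lt_le, rank_last]

lemma measurable_rank {ι : Type*} [Fintype ι] (j : ι) :
    Measurable fun f : ι → ℝ => rank f j := by
  simp only [rank, card_filter]
  exact Finset.measurable_sum _ fun i _ =>
    Measurable.ite (measurableSet_lt (measurable_pi_apply i) (measurable_pi_apply j))
      measurable_const measurable_const

section Probability

variable {Ω : Type*} [MeasurableSpace Ω] {P : Measure Ω} {m : ℕ} {R : Ω → Fin m → ℝ}

lemma Exchangeable.measure_preimage_comp (hexch : Exchangeable P R) (hR : Measurable R)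
    (π : Equiv.Perm (Fin m)) {s : Set (Fin m → ℝ)} (hs : MeasurableSet s) :
    P ((fun ω => R ω ∘ π) ⁻¹' s) = P (R ⁻¹' s) := by
  have hπ : Measurable fun ω => R ω ∘ π :=
    measurable_pi_lambda _ fun i => (measurable_pi_apply (π i)).comp hR
  rw [← Measure.map_apply hπ hs, hexch π, Measure.map_apply hR hs]

lemma Exchangeable.measure_rank_eq_eq_measure_rank_eq (hexch : Exchangeable P R)
    (hR : Measurable R) (i : ℕ) (j j' : Fin m) :
    P {ω | rank (R ω) j = i} = P {ω | rank (R ω) j' = i} := by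
  have h := hexch.measure_preimage_comp hR (Equiv.swap j j')
    (measurable_rank (ι := Fin m) j (measurableSet_singleton i))
  simp only [Set.preimage, Set.mem_singleton_iff, Set.mem_ofPred_eq, rank_comp_equiv,
    Equiv.swap_apply_left] at h
  exact h.symm

variable [IsProbabilityMeasure P]

lemma sum_measure_rank_eq (hR : Measurable R) (hdist : ∀ᵐ ω ∂P, Function.Injective (R ω))
    {i : ℕ} (hi : i < m) : ∑ j, P {ω | rank (R ω) j = i} = 1 := by
  have hmeas (j : Fin m) : MeasurableSet {ω | rank (R ω) j = i} :=
    (measurable_rank j).comp hR (measurableSet_singleton i)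
  calc ∑ j, P {ω | rank (R ω) j = i}
      = ∫⁻ ω, ∑ j, {ω | rank (R ω) j = i}.indicator 1 ω ∂P := by
        rw [lintegral_finsetSum _ fun j _ => measurable_one.indicator (hmeas j)]
        simp only [lintegral_indicator_one (hmeas _)]
    _ = ∫⁻ _, 1 ∂P := lintegral_congr_ae <| hdist.mono fun ω hω => by
        simpa [Set.indicator_apply, ← card_filter] using
          congrArg (Nat.cast (R := ℝ≥0∞)) (card_rank_eq hω (i := i) (by simpa using hi))
    _ = 1 := by simp

lemma Exchangeable.measure_rank_eq (hexch : Exchangeable P R) (hR : Measurable R)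
    (hdist : ∀ᵐ ω ∂P, Function.Injective (R ω)) {i : ℕ} (hi : i < m) (j : Fin m) :
    P {ω | rank (R ω) j = i} = (m : ℝ≥0∞)⁻¹ := by
  refine ENNReal.eq_inv_of_mul_eq_one_left ?_
  rw [mul_comm, ← sum_measure_rank_eq hR hdist hi]
  simp [hexch.measure_rank_eq_eq_measure_rank_eq hR i _ j]

lemma Exchangeable.measure_rank_le (hexch : Exchangeable P R) (hR : Measurable R)
    (hdist : ∀ᵐ ω ∂P, Function.Injective (R ω)) {k : ℕ} (hk : k < m) (j : Fin m) :
    P {ω | rank (R ω) j ≤ k} = (k + 1) / m := by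
  have h := sum_measure_preimage_singleton (μ := P) (range (k + 1)) (f := fun ω => rank (R ω) j)
    fun i _ => (measurable_rank j).comp hR (measurableSet_singleton i)
  simp only [Set.preimage, Set.mem_singleton_iff, coe_range, Set.mem_Iio, Nat.lt_succ_iff] at h
  rw [← h, sum_congr rfl fun i hi => hexch.measure_rank_eq hR hdist (by simp at hi; omega) j]
  simp [div_eq_mul_inv]

end Probability

lemma add_one_div_lt_of_eq_ceil {k n : ℕ} {x : ℝ} (hk : (k : ℤ) + 1 = ⌈x * (n + 1)⌉) :
    ((k : ℝ) + 1) / (n + 1) < x + 1 / (n + 1) := by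
  have hceil : ((k : ℝ) + 1) < x * (n + 1) + 1 := by
    exact_mod_cast hk ▸ Int.ceil_lt_add_one (x * (n + 1))
  rwa [div_lt_iff₀ (by positivity), add_mul, one_div_mul_cancel (by positivity)]

theorem split_conformal_upper_bound_general {Ω : Type*} [MeasurableSpace Ω]
    (P : Measure Ω) [IsProbabilityMeasure P] (n : ℕ) (R : Ω → Fin (n + 1) → ℝ)
    (hR : Measurable R) (hexch : Exchangeable P R)
    (hdist : ∀ᵐ ω ∂P, Function.Injective (R ω))
    (α : ℝ)
    (k : Fin n) (hk : ((k : ℕ) : ℤ) + 1 = ⌈(1 - α) * ((n : ℝ) + 1)⌉) :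
    P {ω | R ω (Fin.last n) ≤ orderStat (fun i : Fin n => R ω i.castSucc) k} <
      ENNReal.ofReal (1 - α + 1 / ((n : ℝ) + 1)) := by
  simp_rw [le_orderStat_init_iff_rank_le]
  rw [hexch.measure_rank_le hR hdist (by omega)]
  have hlhs : ((k : ℝ≥0∞) + 1) / ((n + 1 : ℕ) : ℝ≥0∞) =
      ENNReal.ofReal (((k : ℝ) + 1) / (n + 1)) := by
    rw [ENNReal.ofReal_div_of_pos (by positivity)]
    norm_cast
  rw [hlhs, ENNReal.ofReal_lt_ofReal_iff_of_nonneg (by positivity)]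
  exact add_one_div_lt_of_eq_ceil hk

/-- Split conformal upper bound: for an exchangeable random vector
`(R 0, …, R (n-1), R n)` whose components are almost surely pairwise distinct,
a miscoverage level `0 < α < 1` with `⌈(1 - α)(n + 1)⌉ ≤ n` (witnessed by the
index `k : Fin n` with `k + 1 = ⌈(1 - α)(n + 1)⌉`, 0-indexed), and `r̂` the
`⌈(1 - α)(n + 1)⌉`-th order statistic of the first `n` components, we have
`P(R n ≤ r̂) < 1 - α + 1/(n + 1)`. -/
theorem split_conformal_upper_bound {Ω : Type*} [MeasurableSpace Ω]
    (P : Measure Ω) [IsProbabilityMeasure P] (n : ℕ) (R : Ω → Fin (n + 1) → ℝ)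
    (hR : Measurable R) (hexch : Exchangeable P R)
    (hdist : ∀ᵐ ω ∂P, Function.Injective (R ω))
    (α : ℝ) (hα0 : 0 < α) (hα1 : α < 1)
    (k : Fin n) (hk : ((k : ℕ) : ℤ) + 1 = ⌈(1 - α) * ((n : ℝ) + 1)⌉) :
    P {ω | R ω (Fin.last n) ≤ orderStat (fun i : Fin n => R ω i.castSucc) k} <
      ENNReal.ofReal (1 - α + 1 / ((n : ℝ) + 1)) :=
  split_conformal_upper_bound_general P n R hR hexch hdist α k hk
end

section
/- Let Z_1, …, Z_{n+1} be an exchangeable sequence of random variables taking values in a measurable space E, and let g : E → ℝ be a measurable function. Then the random vector (g(Z_1), …, g(Z_{n+1})) is exchangeable; consequently, for 0 < α < 1 with ⌈(1-α)(n+1)⌉ ≤ n and r̂ denoting the ⌈(1-α)(n+1)⌉-th order statistic of g(Z_1), …, g(Z_n), one has P(g(Z_{n+1}) ≤ r̂) ≥ 1 - α. -/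
open MeasureTheory

/-! Applying `g` coordinatewise commutes with permuting coordinates, so the scores are
exchangeable. Let `Rⱼ` be the number of scores strictly smaller than the `j`-th one. The test
score is at most the `k`-th smallest calibration score (0-indexed) iff `Rₙ ≤ k`. By
exchangeability all `Rⱼ` have the same law, and in every realisation the indices of the `k + 1`
smallest scores satisfy `Rⱼ ≤ k`, ties included. Summing over `j` gives
`(n + 1) P(Rₙ ≤ k) ≥ k + 1 ≥ (1 - α)(n + 1)`. -/

open Finset
open scoped ENNReal

noncomputable def countLt {α : Type*} [LinearOrder α] {m : ℕ} (x : Fin m → α) (c : α) : ℕ :=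
  #{i | x i < c}

section CountLt

variable {α : Type*} [LinearOrder α] {m : ℕ}

lemma countLt_comp_perm (x : Fin m → α) (σ : Equiv.Perm (Fin m)) (c : α) :
    countLt (x ∘ σ) c = countLt x c :=
  card_equiv σ (by simp)

lemma countLt_castSucc_last (x : Fin (m + 1) → α) :
    countLt (fun i : Fin m => x i.castSucc) (x (Fin.last m)) = countLt x (x (Fin.last m)) := by
  simp only [countLt, card_filter, Fin.sum_univ_castSucc, lt_irrefl, if_false, add_zero]

lemma Monotone.le_apply_iff_countLt_le {g : Fin m → α} (hg : Monotone g) (k : Fin m) (c : α) :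
    c ≤ g k ↔ countLt g c ≤ k := by
  constructor
  · intro hc
    calc countLt g c ≤ #(Iio k) := card_le_card fun i hi => by
            simp only [mem_filter, mem_univ, true_and] at hi
            exact mem_Iio.2 (lt_of_not_ge fun hki => (hc.trans (hg hki)).not_gt hi)
      _ = k := Fin.card_Iio k
  · intro hcount
    by_contra! hk
    have : #(Iic k) ≤ countLt g c := card_le_card fun i hi =>
      mem_filter.2 ⟨mem_univ i, (hg (mem_Iic.1 hi)).trans_lt hk⟩
    rw [Fin.card_Iic] at this
    omega

lemma lt_card_countLt_apply_le (x : Fin m → α) {k : ℕ} (hk : k < m) :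
    k < #{j | countLt x (x j) ≤ k} := by
  set σ := Tuple.sort x
  have hrank (p : Fin m) : countLt x (x (σ p)) ≤ p := by
    rw [← countLt_comp_perm x σ]
    exact ((Tuple.monotone_sort x).le_apply_iff_countLt_le p _).1 le_rfl
  calc k < #(Iic (⟨k, hk⟩ : Fin m)) := by simp
    _ ≤ #{j | countLt x (x j) ≤ k} := card_le_card_of_injOn σ
        (fun p hp => by
          rw [coe_Iic, Set.mem_Iic, Fin.le_def] at hp
          simpa using (hrank p).trans hp)
        σ.injective.injOn

end CountLt

lemma le_orderStat_iff {m : ℕ} (f : Fin m → ℝ) (k : Fin m) (c : ℝ) :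
    c ≤ orderStat f k ↔ countLt f c ≤ k := by
  rw [← countLt_comp_perm f (Tuple.sort f)]
  exact (Tuple.monotone_sort f).le_apply_iff_countLt_le k c

lemma le_orderStat_castSucc_iff {m : ℕ} (x : Fin (m + 1) → ℝ) (k : Fin m) :
    x (Fin.last m) ≤ orderStat (fun i => x i.castSucc) k ↔ countLt x (x (Fin.last m)) ≤ k := by
  rw [le_orderStat_iff, countLt_castSucc_last]

lemma measurable_countLt_apply {m : ℕ} (j : Fin m) :
    Measurable fun x : Fin m → ℝ => countLt x (x j) := by
  simp only [countLt, card_filter]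
  exact Finset.measurable_sum _ fun i _ =>
    Measurable.ite (measurableSet_lt (measurable_pi_apply i) (measurable_pi_apply j))
      measurable_const measurable_const

lemma ENNReal.ofReal_le_of_mul_le_of_le_mul {x : ℝ} {m r : ℕ} {p : ℝ≥0∞} (hm : m ≠ 0)
    (hx : x * m ≤ r) (hp : (r : ℝ≥0∞) ≤ m * p) : ENNReal.ofReal x ≤ p := by
  refine (ENNReal.mul_le_mul_iff_right (by simpa) (by simp)).1 (le_trans ?_ hp)
  calc (m : ℝ≥0∞) * ENNReal.ofReal x = ENNReal.ofReal (x * m) := by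
        rw [ENNReal.ofReal_mul' (Nat.cast_nonneg _), ENNReal.ofReal_natCast, mul_comm]
    _ ≤ r := (ENNReal.ofReal_le_ofReal hx).trans_eq (ENNReal.ofReal_natCast _)

open Classical in
lemma natCast_mul_measure_univ_le_sum {Ω ι : Type*} [MeasurableSpace Ω] {μ : Measure Ω}
    (s : Finset ι) {A : ι → Set Ω}
    (hA : ∀ i, MeasurableSet (A i)) {r : ℕ} (hr : ∀ ω, r ≤ #{i ∈ s | ω ∈ A i}) :
    r * μ Set.univ ≤ ∑ i ∈ s, μ (A i) := by
  have hcount (ω : Ω) : ∑ i ∈ s, (A i).indicator 1 ω = (#{i ∈ s | ω ∈ A i} : ℝ≥0∞) := by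
    simp only [Set.indicator_apply, Pi.one_apply, natCast_card_filter]
  calc r * μ Set.univ = ∫⁻ _, (r : ℝ≥0∞) ∂μ := (lintegral_const _).symm
    _ ≤ ∫⁻ ω, ∑ i ∈ s, (A i).indicator 1 ω ∂μ :=
        lintegral_mono fun ω => by rw [hcount]; exact Nat.cast_le.2 (hr ω)
    _ = ∑ i ∈ s, μ (A i) := by
        rw [lintegral_finsetSum _ fun i _ => measurable_one.indicator (hA i)]
        simp only [lintegral_indicator_one (hA _)]

section Exchangeable

variable {Ω : Type*} [MeasurableSpace Ω] {P : Measure Ω} {m : ℕ}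

lemma exchangeable_comp {E : Type*} [MeasurableSpace E] {Z : Ω → Fin m → E} (hZ : Measurable Z)
    (hexch : ∀ π : Equiv.Perm (Fin m), Measure.map (fun ω => Z ω ∘ π) P = Measure.map Z P)
    {g : E → ℝ} (hg : Measurable g) :
    Exchangeable P (fun ω i => g (Z ω i)) := by
  have hG : Measurable fun y : Fin m → E => g ∘ y := by fun_prop
  intro π
  calc Measure.map (fun ω => g ∘ (Z ω ∘ π)) P
        = Measure.map (fun y => g ∘ y) (Measure.map (fun ω => Z ω ∘ π) P) :=
          (Measure.map_map hG (by fun_prop)).symm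
    _ = Measure.map (fun ω => g ∘ Z ω) P := by rw [hexch π, Measure.map_map hG hZ]; rfl

variable {R : Ω → Fin m → ℝ}

lemma Exchangeable.measure_comp_perm_mem (hR : Exchangeable P R) (hRm : Measurable R)
    (π : Equiv.Perm (Fin m)) {S : Set (Fin m → ℝ)} (hS : MeasurableSet S) :
    P {ω | R ω ∘ π ∈ S} = P {ω | R ω ∈ S} := by
  change P ((fun ω => R ω ∘ π) ⁻¹' S) = P (R ⁻¹' S)
  rw [← Measure.map_apply (by fun_prop) hS, hR π, Measure.map_apply hRm hS]

lemma Exchangeable.measure_countLt_le_eq (hR : Exchangeable P R) (hRm : Measurable R)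
    (k : ℕ) (i j : Fin m) :
    P {ω | countLt (R ω) (R ω i) ≤ k} = P {ω | countLt (R ω) (R ω j) ≤ k} := by
  have h := hR.measure_comp_perm_mem hRm (Equiv.swap i j)
    (measurable_countLt_apply j measurableSet_Iic :
      MeasurableSet {x : Fin m → ℝ | countLt x (x j) ≤ k})
  simpa [countLt_comp_perm] using h

lemma Exchangeable.succ_le_mul_measure_countLt_le [IsProbabilityMeasure P]
    (hR : Exchangeable P R) (hRm : Measurable R) {k : ℕ} (hk : k < m) (j : Fin m) :
    ((k + 1 : ℕ) : ℝ≥0∞) ≤ m * P {ω | countLt (R ω) (R ω j) ≤ k} := by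
  have hA (i : Fin m) : MeasurableSet {ω | countLt (R ω) (R ω i) ≤ k} :=
    (measurable_countLt_apply i).comp hRm measurableSet_Iic
  calc ((k + 1 : ℕ) : ℝ≥0∞) = (k + 1 : ℕ) * P Set.univ := by rw [measure_univ, mul_one]
    _ ≤ ∑ i, P {ω | countLt (R ω) (R ω i) ≤ k} :=
        natCast_mul_measure_univ_le_sum univ hA fun ω => by
          convert Nat.succ_le_of_lt (lt_card_countLt_apply_le (R ω) hk)
          rfl
    _ = m * P {ω | countLt (R ω) (R ω j) ≤ k} := by
        simp [hR.measure_countLt_le_eq hRm k _ j]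

end Exchangeable

theorem split_conformal_score_exchangeable_and_coverage_general
    {Ω E : Type*} [MeasurableSpace Ω] [MeasurableSpace E]
    (P : Measure Ω) [IsProbabilityMeasure P] (n : ℕ)
    (Z : Ω → Fin (n + 1) → E) (hZ : Measurable Z)
    (hexch : ∀ π : Equiv.Perm (Fin (n + 1)),
      Measure.map (fun ω => Z ω ∘ π) P = Measure.map Z P)
    (g : E → ℝ) (hg : Measurable g)
    (α : ℝ)
    (k : Fin n) (hk : ((k : ℕ) : ℤ) + 1 = ⌈(1 - α) * ((n : ℝ) + 1)⌉) :
    Exchangeable P (fun ω i => g (Z ω i)) ∧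
      ENNReal.ofReal (1 - α) ≤
        P {ω | g (Z ω (Fin.last n)) ≤
          orderStat (fun i : Fin n => g (Z ω i.castSucc)) k} := by
  have hR := exchangeable_comp hZ hexch hg
  refine ⟨hR, ?_⟩
  have hrank := hR.succ_le_mul_measure_countLt_le (by fun_prop) (k.isLt.trans n.lt_succ_self)
    (Fin.last n)
  have hceil : (1 - α) * (n + 1 : ℕ) ≤ (k + 1 : ℕ) := by
    have := Int.le_ceil ((1 - α) * ((n : ℝ) + 1))
    rw [← hk] at this
    exact_mod_cast this
  have hevent : {ω | g (Z ω (Fin.last n)) ≤ orderStat (fun i : Fin n => g (Z ω i.castSucc)) k} =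
      {ω | countLt (fun i => g (Z ω i)) (g (Z ω (Fin.last n))) ≤ k} :=
    Set.ext fun ω => le_orderStat_castSucc_iff (fun i => g (Z ω i)) k
  rw [hevent]
  exact ENNReal.ofReal_le_of_mul_le_of_le_mul n.succ_ne_zero hceil hrank

/-- Split conformal prediction with a fixed score function: if `Z 0, …, Z n` is an
exchangeable sequence in `E` and `g : E → ℝ` is measurable, then
`(g (Z 0), …, g (Z n))` is exchangeable and, for `0 < α < 1` with
`⌈(1 - α)(n + 1)⌉ ≤ n` (witnessed by `k : Fin n` with `k + 1 = ⌈(1 - α)(n + 1)⌉`,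
0-indexed) and `r̂` the corresponding order statistic of `g (Z 0), …, g (Z (n-1))`,
we have `P(g (Z n) ≤ r̂) ≥ 1 - α`. -/
theorem split_conformal_score_exchangeable_and_coverage
    {Ω E : Type*} [MeasurableSpace Ω] [MeasurableSpace E]
    (P : Measure Ω) [IsProbabilityMeasure P] (n : ℕ)
    (Z : Ω → Fin (n + 1) → E) (hZ : Measurable Z)
    (hexch : ∀ π : Equiv.Perm (Fin (n + 1)),
      Measure.map (fun ω => Z ω ∘ π) P = Measure.map Z P)
    (g : E → ℝ) (hg : Measurable g)
    (α : ℝ) (hα0 : 0 < α) (hα1 : α < 1)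
    (k : Fin n) (hk : ((k : ℕ) : ℤ) + 1 = ⌈(1 - α) * ((n : ℝ) + 1)⌉) :
    Exchangeable P (fun ω i => g (Z ω i)) ∧
      ENNReal.ofReal (1 - α) ≤
        P {ω | g (Z ω (Fin.last n)) ≤
          orderStat (fun i : Fin n => g (Z ω i.castSucc)) k} :=
  split_conformal_score_exchangeable_and_coverage_general P n Z hZ hexch g hg α k hk
end
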